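/- Every balanced normal d-pseudomanifold has at least 2^{d+1} facets. -/

import Mathlib

/-- A finite abstract simplicial complex with vertex set contained in `ℕ`:
a finite collection of finite sets (faces) closed under taking subsets. -/
structure SComplex where
  faces : Finset (Finset ℕ)
  down_closed : ∀ σ ∈ faces, ∀ τ, τ ⊆ σ → τ ∈ faces

namespace SComplex

/-- The facets: the inclusion-maximal faces. -/
def facets (Δ : SComplex) : Finset (Finset ℕ) :=
  Δ.faces.filter fun σ => ∀ τ ∈ Δ.faces, σ ⊆ τ → σ = τ

/-- `Δ` is pure of dimension `d`: every facet has exactly `d+1` vertices. -/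
def Pure (Δ : SComplex) (d : ℕ) : Prop :=
  ∀ σ ∈ Δ.facets, σ.card = d + 1

/-- The link of a face `σ`:  `lk (σ,Δ) = {γ ∈ Δ : γ ∩ σ = ∅ and γ ∪ σ ∈ Δ}`. -/
def lk (Δ : SComplex) (σ : Finset ℕ) : SComplex where
  faces := Δ.faces.filter fun γ => γ ∩ σ = ∅ ∧ γ ∪ σ ∈ Δ.faces
  down_closed := by
    intro γ hγ τ hτ
    rw [Finset.mem_filter] at hγ ⊢
    refine ⟨Δ.down_closed γ hγ.1 τ hτ, ?_, ?_⟩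
    · exact Finset.subset_empty.1 (hγ.2.1 ▸ Finset.inter_subset_inter hτ Finset.Subset.rfl)
    · exact Δ.down_closed _ hγ.2.2 _ (Finset.union_subset_union hτ Finset.Subset.rfl)

/-- The number of vertices of a complex. -/
def vertCount (Δ : SComplex) : ℕ := (Δ.faces.filter fun σ => σ.card = 1).card

/-- The degree of a face: the number of vertices of its link. -/
def deg (Δ : SComplex) (σ : Finset ℕ) : ℕ := (Δ.lk σ).vertCount

/-- Connectivity of a complex: any two vertices are joined by an edge-path. -/
def Conn (Δ : SComplex) : Prop :=
  ∀ u v : ℕ, {u} ∈ Δ.faces → {v} ∈ Δ.faces →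
    Relation.ReflTransGen (fun a b => a ≠ b ∧ ({a, b} : Finset ℕ) ∈ Δ.faces) u v

/-- A normal `d`-pseudomanifold: a pure `d`-dimensional complex in which every
`(d-1)`-face is contained in exactly two facets, any two facets are connected by a
sequence of facets in which consecutive facets share a `(d-1)`-face, and the link of
every face of dimension at most `d-2` is connected. -/
def IsNormalPseudomanifold (Δ : SComplex) (d : ℕ) : Prop :=
  Δ.faces.Nonempty ∧ Δ.Pure d ∧
  (∀ σ ∈ Δ.faces, σ.card = d → (Δ.facets.filter fun τ => σ ⊆ τ).card = 2) ∧
  (∀ σ ∈ Δ.facets, ∀ τ ∈ Δ.facets,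
    Relation.ReflTransGen
      (fun α β => α ∈ Δ.facets ∧ β ∈ Δ.facets ∧ (α ∩ β).card = d) σ τ) ∧
  (∀ σ ∈ Δ.faces, σ.card + 1 ≤ d → (Δ.lk σ).Conn)

/-- The Euler characteristic `χ(Δ) = Σ_i (-1)^i f_i(Δ)`. -/
def eulerChar (Δ : SComplex) : ℤ :=
  ∑ σ ∈ Δ.faces.filter (fun σ => σ ≠ ∅), (-1 : ℤ) ^ (σ.card + 1)

/-- The geometric carrier `‖Δ‖` of a complex, realized in `ℝ^ℕ`. -/
def carrier (Δ : SComplex) : Set (ℕ → ℝ) :=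
  {f | ∃ σ ∈ Δ.faces, (∀ v, v ∉ σ → f v = 0) ∧ (∀ v, 0 ≤ f v) ∧ ∑ v ∈ σ, f v = 1}

/-- The 1-skeleton of `Δ`, as a simple graph on `ℕ`. -/
def graph (Δ : SComplex) : SimpleGraph ℕ where
  Adj u v := u ≠ v ∧ ({u, v} : Finset ℕ) ∈ Δ.faces
  symm := by
    constructor
    rintro u v ⟨h1, h2⟩
    exact ⟨h1.symm, by rwa [Finset.pair_comm]⟩
  loopless := ⟨by intro v h; exact h.1 rfl⟩

end SComplex

/-- A balanced complex of dimension `d`: a simplicial complex together with a proper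
vertex coloring by the `d+1` colors `[d] = {0,…,d}`. -/
structure BalancedComplex (d : ℕ) extends SComplex where
  κ : ℕ → Fin (d + 1)
  proper : ∀ σ ∈ faces, ∀ u ∈ σ, ∀ v ∈ σ, κ u = κ v → u = v

namespace BalancedComplex

variable {d : ℕ}

/-- The flag f-number `f_S`: the number of faces with color set exactly `S`. -/
def fS (Δ : BalancedComplex d) (S : Finset (Fin (d + 1))) : ℕ :=
  (Δ.faces.filter fun σ => σ.image Δ.κ = S).card

/-- `f_i`: the number of `i`-dimensional faces. -/
def fNum (Δ : BalancedComplex d) (i : ℕ) : ℕ :=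
  (Δ.faces.filter fun σ => σ.card = i + 1).card

/-- The rank-selected subcomplex `Δ_S`. -/
def restrict (Δ : BalancedComplex d) (S : Finset (Fin (d + 1))) : SComplex where
  faces := Δ.faces.filter fun σ => σ.image Δ.κ ⊆ S
  down_closed := by
    intro σ hσ τ hτ
    rw [Finset.mem_filter] at hσ ⊢
    exact ⟨Δ.down_closed σ hσ.1 τ hτ, (Finset.image_subset_image hτ).trans hσ.2⟩

/-- `Γ_S(Δ) = f_S(Δ) - Σ_{i ∈ S} f_{{i}}(Δ)`. -/
def Gamma (Δ : BalancedComplex d) (S : Finset (Fin (d + 1))) : ℤ :=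
  (Δ.fS S : ℤ) - ∑ i ∈ S, (Δ.fS {i} : ℤ)

/-- The balanced ε-genus
`ρ_ε(Δ) = 1 - ((1-d)/4)·f_d(Δ) - (1/2)·Σ_{i ∈ Z_{d+1}} f_{d-2}^{ε_i ε_{i+1}}(Δ)`,
where a cyclic permutation of `[d]` is recorded as a permutation `ε` of `Fin (d+1)`
read cyclically. -/
def rho (Δ : BalancedComplex d) (ε : Equiv.Perm (Fin (d + 1))) : ℚ :=
  1 - (1 - (d : ℚ)) / 4 * (Δ.fNum d : ℚ)
    - (1 / 2) * ∑ i : Fin (d + 1), (Δ.fS (Finset.univ \ {ε i, ε (i + 1)}) : ℚ)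

/-- The balanced genus `𝒢(Δ)`: the minimum of `ρ_ε(Δ)` over all cyclic permutations. -/
def genus (Δ : BalancedComplex d) : ℚ :=
  (Finset.univ.image Δ.rho).min'
    (Finset.Nonempty.image ⟨1, Finset.mem_univ 1⟩ Δ.rho)

end BalancedComplex

section Aux

open Finset

lemma headI_mem_of_card_one {t : Finset (Finset ℕ)} (h : t.card = 1) :
    t.toList.headI ∈ t := by
  rcases Finset.card_eq_one.mp h with ⟨a, rfl⟩
  simp

lemma exists_facet (Δ : SComplex) {σ : Finset ℕ} (h : σ ∈ Δ.faces) :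
    ∃ F ∈ Δ.facets, σ ⊆ F := by
  obtain ⟨F, hF, hmax⟩ :=
    (Δ.faces.filter fun τ => σ ⊆ τ).exists_max_image Finset.card ⟨σ, by simp [h]⟩
  rw [Finset.mem_filter] at hF
  refine ⟨F, ?_, hF.2⟩
  rw [SComplex.facets, Finset.mem_filter]
  refine ⟨hF.1, fun τ hτ hFτ => ?_⟩
  exact Finset.eq_of_subset_of_card_le hFτ
    (hmax τ (Finset.mem_filter.mpr ⟨hτ, hF.2.trans hFτ⟩))

lemma mem_faces_of_mem_facets (Δ : SComplex) {σ : Finset ℕ} (h : σ ∈ Δ.facets) :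
    σ ∈ Δ.faces := (Finset.mem_filter.mp h).1

lemma key_lemma {d : ℕ} (Δ : BalancedComplex d)
    (hpure : Δ.toSComplex.Pure d)
    (hridge : ∀ σ ∈ Δ.toSComplex.faces, σ.card = d →
      (Δ.toSComplex.facets.filter fun τ => σ ⊆ τ).card = 2) :
    ∀ j (σ : Finset ℕ), σ ∈ Δ.toSComplex.faces → σ.card + j = d + 1 →
      2 ^ j ≤ (Δ.toSComplex.facets.filter fun τ => σ ⊆ τ).card := by
  intro j
  induction j with
  | zero =>
    intro σ hσ hcard
    obtain ⟨F, hF, hσF⟩ := exists_facet _ hσ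
    have hFc := hpure F hF
    have hσF' : σ = F := Finset.eq_of_subset_of_card_le hσF (by omega)
    subst hσF'
    have : σ ∈ Δ.toSComplex.facets.filter fun τ => σ ⊆ τ :=
      Finset.mem_filter.mpr ⟨hF, Finset.Subset.rfl⟩
    have := Finset.card_pos.mpr ⟨σ, this⟩
    omega
  | succ j ih =>
    intro σ hσ hcard
    obtain ⟨F, hFfac, hσF⟩ := exists_facet _ hσ
    have hFcard : F.card = d + 1 := hpure F hFfac
    have hne : σ ≠ F := by intro h; subst h; omega
    obtain ⟨v, hvF, hvσ⟩ :=
      Finset.exists_of_ssubset (Finset.ssubset_iff_subset_ne.mpr ⟨hσF, hne⟩)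
    have hFfaces : F ∈ Δ.toSComplex.faces := mem_faces_of_mem_facets _ hFfac
    have hσ' : insert v σ ∈ Δ.toSComplex.faces :=
      Δ.down_closed F hFfaces _ (Finset.insert_subset hvF hσF)
    have hσ'card : (insert v σ).card = σ.card + 1 := Finset.card_insert_of_notMem hvσ
    have hA : 2 ^ j ≤ (Δ.toSComplex.facets.filter fun τ => insert v σ ⊆ τ).card :=
      ih _ hσ' (by omega)
    -- the "other facet" map
    set f : Finset ℕ → Finset ℕ := fun τ =>
      ((Δ.toSComplex.facets.filter fun s => τ.erase v ⊆ s).erase τ).toList.headI with hf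
    -- basic facts for facets containing `insert v σ`
    have hfacts : ∀ τ ∈ Δ.toSComplex.facets.filter fun τ => insert v σ ⊆ τ,
        f τ ∈ Δ.toSComplex.facets ∧ τ.erase v ⊆ f τ ∧ f τ ≠ τ ∧ v ∉ f τ ∧ σ ⊆ f τ := by
      intro τ hτ
      rw [Finset.mem_filter] at hτ
      obtain ⟨hτfac, hτsub⟩ := hτ
      have hvτ : v ∈ τ := hτsub (Finset.mem_insert_self v σ)
      have hστ : σ ⊆ τ := (Finset.subset_insert v σ).trans hτsub
      have hτfaces : τ ∈ Δ.toSComplex.faces := mem_faces_of_mem_facets _ hτfac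
      have hτcard : τ.card = d + 1 := hpure τ hτfac
      have hρfaces : τ.erase v ∈ Δ.toSComplex.faces :=
        Δ.down_closed τ hτfaces _ (Finset.erase_subset v τ)
      have hρcard : (τ.erase v).card = d := by
        rw [Finset.card_erase_of_mem hvτ]; omega
      have h2 := hridge _ hρfaces hρcard
      have hτmem : τ ∈ Δ.toSComplex.facets.filter fun s => τ.erase v ⊆ s :=
        Finset.mem_filter.mpr ⟨hτfac, Finset.erase_subset v τ⟩
      have h1 : ((Δ.toSComplex.facets.filter fun s => τ.erase v ⊆ s).erase τ).card = 1 := by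
        rw [Finset.card_erase_of_mem hτmem, h2]
      have hfτ : f τ ∈ (Δ.toSComplex.facets.filter fun s => τ.erase v ⊆ s).erase τ :=
        headI_mem_of_card_one h1
      have hne' : f τ ≠ τ := Finset.ne_of_mem_erase hfτ
      have hfτ' := Finset.mem_of_mem_erase hfτ
      rw [Finset.mem_filter] at hfτ'
      obtain ⟨hfτfac, hρsub⟩ := hfτ'
      have hvf : v ∉ f τ := by
        intro hvf
        have hsub : τ ⊆ f τ := by
          have := Finset.insert_subset hvf hρsub
          rwa [Finset.insert_erase hvτ] at this
        have hfcard : (f τ).card = d + 1 := hpure _ hfτfac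
        exact hne' (Finset.eq_of_subset_of_card_le hsub (by omega)).symm
      have hσρ : σ ⊆ τ.erase v := Finset.subset_erase.mpr ⟨hστ, hvσ⟩
      exact ⟨hfτfac, hρsub, hne', hvf, hσρ.trans hρsub⟩
    -- color of the vertex replaced is κ v
    have hcolor : ∀ τ ∈ Δ.toSComplex.facets.filter fun τ => insert v σ ⊆ τ,
        ∀ w ∈ f τ, w ∉ τ.erase v → Δ.κ w = Δ.κ v := by
      intro τ hτ w hwfτ hwρ
      obtain ⟨hfτfac, hρsub, _, _, _⟩ := hfacts τ hτ
      rw [Finset.mem_filter] at hτ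
      obtain ⟨hτfac, hτsub⟩ := hτ
      have hvτ : v ∈ τ := hτsub (Finset.mem_insert_self v σ)
      have hτfaces : τ ∈ Δ.toSComplex.faces := mem_faces_of_mem_facets _ hτfac
      have hτcard : τ.card = d + 1 := hpure τ hτfac
      have hffaces : f τ ∈ Δ.toSComplex.faces := mem_faces_of_mem_facets _ hfτfac
      have hρτ : τ.erase v ⊆ τ := Finset.erase_subset v τ
      have hρcard : (τ.erase v).card = d := by
        rw [Finset.card_erase_of_mem hvτ]; omega
      -- image of the ridge under κ
      have hinjτ : Set.InjOn Δ.κ ↑(τ.erase v) := by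
        intro a ha b hb hab
        exact Δ.proper τ hτfaces a (hρτ (by exact_mod_cast ha)) b (hρτ (by exact_mod_cast hb)) hab
      have himcard : ((τ.erase v).image Δ.κ).card = d := by
        rw [Finset.card_image_of_injOn hinjτ, hρcard]
      have hκv : Δ.κ v ∉ (τ.erase v).image Δ.κ := by
        rw [Finset.mem_image]
        rintro ⟨x, hx, hκx⟩
        have := Δ.proper τ hτfaces x (hρτ hx) v hvτ hκx
        subst this
        exact Finset.notMem_erase x τ hx
      have hκw : Δ.κ w ∉ (τ.erase v).image Δ.κ := by
        rw [Finset.mem_image]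
        rintro ⟨x, hx, hκx⟩
        exact hwρ (Δ.proper (f τ) hffaces x (hρsub hx) w hwfτ hκx ▸ hx)
      -- complement has one element
      have hcompl : (Finset.univ \ (τ.erase v).image Δ.κ).card = 1 := by
        rw [Finset.card_sdiff_of_subset (Finset.subset_univ _), himcard, Finset.card_univ,
          Fintype.card_fin]
        omega
      have h1 := Finset.card_le_one.mp (le_of_eq hcompl)
      exact h1 _ (Finset.mem_sdiff.mpr ⟨Finset.mem_univ _, hκw⟩)
        _ (Finset.mem_sdiff.mpr ⟨Finset.mem_univ _, hκv⟩)
    -- injection from facets containing insert v σ to facets containing σ but not v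
    have hBA : (Δ.toSComplex.facets.filter fun τ => insert v σ ⊆ τ).card ≤
        (Δ.toSComplex.facets.filter fun τ => σ ⊆ τ ∧ v ∉ τ).card := by
      apply Finset.card_le_card_of_injOn f
      · intro τ hτ
        obtain ⟨hfτfac, _, _, hvf, hσf⟩ := hfacts τ hτ
        exact Finset.mem_filter.mpr ⟨hfτfac, hσf, hvf⟩
      · intro τ₁ hτ₁' τ₂ hτ₂' heq
        have hτ₁ := Finset.mem_coe.mp hτ₁'
        have hτ₂ := Finset.mem_coe.mp hτ₂'
        clear hτ₁' hτ₂'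
        obtain ⟨hfac₁, hρ₁, _, _, _⟩ := hfacts τ₁ hτ₁
        obtain ⟨hfac₂, hρ₂, _, _, _⟩ := hfacts τ₂ hτ₂
        rw [heq] at hρ₁ hfac₁
        have hscard : (f τ₂).card = d + 1 := hpure _ hfac₂
        have hsfaces : f τ₂ ∈ Δ.toSComplex.faces := mem_faces_of_mem_facets _ hfac₂
        have hτ₁' := Finset.mem_filter.mp hτ₁
        have hτ₂' := Finset.mem_filter.mp hτ₂
        have hv₁ : v ∈ τ₁ := hτ₁'.2 (Finset.mem_insert_self v σ)
        have hv₂ : v ∈ τ₂ := hτ₂'.2 (Finset.mem_insert_self v σ)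
        have hc₁ : (τ₁.erase v).card = d := by
          rw [Finset.card_erase_of_mem hv₁, hpure _ hτ₁'.1]; omega
        have hc₂ : (τ₂.erase v).card = d := by
          rw [Finset.card_erase_of_mem hv₂, hpure _ hτ₂'.1]; omega
        -- the missing vertices
        have hd₁ : (f τ₂ \ τ₁.erase v).card = 1 := by
          rw [Finset.card_sdiff_of_subset hρ₁, hscard, hc₁]; omega
        have hd₂ : (f τ₂ \ τ₂.erase v).card = 1 := by
          rw [Finset.card_sdiff_of_subset hρ₂, hscard, hc₂]; omega
        obtain ⟨w₁, hw₁⟩ := Finset.card_eq_one.mp hd₁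
        obtain ⟨w₂, hw₂⟩ := Finset.card_eq_one.mp hd₂
        have hw₁m : w₁ ∈ f τ₂ \ τ₁.erase v := hw₁ ▸ Finset.mem_singleton_self w₁
        have hw₂m : w₂ ∈ f τ₂ \ τ₂.erase v := hw₂ ▸ Finset.mem_singleton_self w₂
        rw [Finset.mem_sdiff] at hw₁m hw₂m
        have hκ₁ : Δ.κ w₁ = Δ.κ v := hcolor τ₁ hτ₁ w₁ (heq ▸ hw₁m.1) (by
          intro h; exact hw₁m.2 h)
        have hκ₂ : Δ.κ w₂ = Δ.κ v := hcolor τ₂ hτ₂ w₂ hw₂m.1 hw₂m.2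
        have hw : w₁ = w₂ :=
          Δ.proper (f τ₂) hsfaces w₁ hw₁m.1 w₂ hw₂m.1 (hκ₁.trans hκ₂.symm)
        have hρeq : τ₁.erase v = τ₂.erase v := by
          have e₁ : τ₁.erase v = f τ₂ \ {w₁} := by
            rw [← hw₁, _root_.sdiff_sdiff_eq_self hρ₁]
          have e₂ : τ₂.erase v = f τ₂ \ {w₂} := by
            rw [← hw₂, _root_.sdiff_sdiff_eq_self hρ₂]
          rw [e₁, e₂, hw]
        calc τ₁ = insert v (τ₁.erase v) := (Finset.insert_erase hv₁).symm
          _ = insert v (τ₂.erase v) := by rw [hρeq]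
          _ = τ₂ := Finset.insert_erase hv₂
    -- put things together
    have hdisj : Disjoint (Δ.toSComplex.facets.filter fun τ => insert v σ ⊆ τ)
        (Δ.toSComplex.facets.filter fun τ => σ ⊆ τ ∧ v ∉ τ) := by
      rw [Finset.disjoint_left]
      intro τ h₁ h₂
      rw [Finset.mem_filter] at h₁ h₂
      exact h₂.2.2 (h₁.2 (Finset.mem_insert_self v σ))
    have hsub : (Δ.toSComplex.facets.filter fun τ => insert v σ ⊆ τ) ∪
        (Δ.toSComplex.facets.filter fun τ => σ ⊆ τ ∧ v ∉ τ) ⊆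
        Δ.toSComplex.facets.filter fun τ => σ ⊆ τ := by
      intro τ hτ
      rw [Finset.mem_union, Finset.mem_filter, Finset.mem_filter] at hτ
      rw [Finset.mem_filter]
      rcases hτ with h | h
      · exact ⟨h.1, (Finset.subset_insert v σ).trans h.2⟩
      · exact ⟨h.1, h.2.1⟩
    have := Finset.card_le_card hsub
    rw [Finset.card_union_of_disjoint hdisj] at this
    have : 2 ^ j + 2 ^ j ≤ (Δ.toSComplex.facets.filter fun τ => σ ⊆ τ).card := by omega
    calc (2:ℕ) ^ (j + 1) = 2 ^ j + 2 ^ j := by ring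
      _ ≤ _ := this

end Aux

/-- Every balanced normal `d`-pseudomanifold has at least `2^(d+1)`
facets. -/
theorem statement5 (d : ℕ) (Δ : BalancedComplex d)
    (hΔ : Δ.toSComplex.IsNormalPseudomanifold d) :
    2 ^ (d + 1) ≤ Δ.toSComplex.facets.card := by
  obtain ⟨hne, hpure, hridge, -, -⟩ := hΔ
  obtain ⟨σ₀, hσ₀⟩ := hne
  have hempty : (∅ : Finset ℕ) ∈ Δ.toSComplex.faces :=
    Δ.down_closed σ₀ hσ₀ ∅ (Finset.empty_subset σ₀)
  have h := key_lemma Δ hpure hridge (d + 1) ∅ hempty (by simp)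
  calc 2 ^ (d + 1) ≤ (Δ.toSComplex.facets.filter fun τ => ∅ ⊆ τ).card := h
    _ ≤ Δ.toSComplex.facets.card := Finset.card_le_card (Finset.filter_subset _ _)
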